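/- There exists an absolute constant C > 0 such that for every n ≥ 1 and every β ≥ C·n^{3/2} there is λ_0 = λ_0(n,β) ≥ 1 with the following property: for every λ ≥ λ_0, the atomic σ-algebras Σ_a = σ⟨A_s : s ≥ 0⟩ and Σ_b = σ⟨B_s : s ≥ 0⟩, with distinguished atoms A_0 and B_0, form an admissible covering of (ℝ^n, ν_β) (note ν_β(ℝ^n) < ∞ since β > n). -/

import Mathlib

open MeasureTheory ENNReal

/-- An atomic σ-subalgebra of the ambient σ-algebra, encoded by the countable
measurable partition of `Ω` into atoms of positive finite measure generating it. -/
structure AtomicPartition {Ω : Type*} {m : MeasurableSpace Ω} (μ : Measure Ω) where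
  ι : Type
  countable : Countable ι
  atom : ι → Set Ω
  measurableSet : ∀ i, MeasurableSet (atom i)
  disjoint : Pairwise (Function.onFun Disjoint atom)
  cover : ⋃ i, atom i = Set.univ
  pos : ∀ i, 0 < μ (atom i)
  lt_top : ∀ i, μ (atom i) < ∞

namespace AtomicPartition

variable {Ω : Type*} {m : MeasurableSpace Ω} {μ : Measure Ω}

/-- The σ-algebra generated by the atoms. -/
def sigma (P : AtomicPartition μ) : MeasurableSpace Ω :=
  MeasurableSpace.generateFrom (Set.range P.atom)

/-- The conditional expectation onto the atomic σ-algebra: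
`E f = ∑_A (μ(A)⁻¹ ∫_A f dμ) · 1_A`. -/
noncomputable def condExp (P : AtomicPartition μ) {E : Type*} [NormedAddCommGroup E]
    [NormedSpace ℝ E] (f : Ω → E) : Ω → E := fun x =>
  ∑' i, Set.indicator (P.atom i)
    (fun _ => (μ (P.atom i)).toReal⁻¹ • ∫ y in P.atom i, f y ∂μ) x

end AtomicPartition

/-- `|R_B|`: the number (in `ℝ≥0∞`) of atoms of `Pa` meeting the atom `Pb.atom j`
in positive measure. -/
noncomputable def rCard {Ω : Type*} {m : MeasurableSpace Ω} (μ : Measure Ω)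
    (Pa Pb : AtomicPartition μ) (j : Pb.ι) : ℝ≥0∞ :=
  ∑' _i : {i : Pa.ι // 0 < μ (Pa.atom i ∩ Pb.atom j)}, 1

/-- `∑_{B ∈ R_A} |R_B| · μ(A∩B)² / (μ(A)μ(B))` for the atom `A = Pa.atom i`
(terms with `μ(A∩B) = 0` vanish, so we may sum over all atoms of `Pb`). -/
noncomputable def atomSum {Ω : Type*} {m : MeasurableSpace Ω} (μ : Measure Ω)
    (Pa Pb : AtomicPartition μ) (i : Pa.ι) : ℝ≥0∞ :=
  ∑' j : Pb.ι, rCard μ Pa Pb j * μ (Pa.atom i ∩ Pb.atom j) ^ 2 /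
    (μ (Pa.atom i) * μ (Pb.atom j))

/-- `Σ_a ∩ Σ_b = {Ω, ∅}` modulo `μ`-null sets. -/
def TrivialIntersection {Ω : Type*} {m : MeasurableSpace Ω} (μ : Measure Ω)
    (ma mb : MeasurableSpace Ω) : Prop :=
  ∀ S T : Set Ω, MeasurableSet[ma] S → MeasurableSet[mb] T →
    μ (symmDiff S T) = 0 → μ S = 0 ∨ μ Sᶜ = 0

/-- `(Σ_a, Σ_b)` is an admissible covering of `(Ω, Σ, μ)` with distinguished atoms
`A0, B0` (which are actual atoms when `μ` is finite, and `∅`, i.e. `none`, when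
`μ(Ω) = ∞`). -/
structure IsAdmissibleCovering {Ω : Type*} {m : MeasurableSpace Ω} (μ : Measure Ω)
    (Pa Pb : AtomicPartition μ) (A0 : Option Pa.ι) (B0 : Option Pb.ι) : Prop where
  trivial_inter : TrivialIntersection μ Pa.sigma Pb.sigma
  infinite_case : μ Set.univ = ∞ → A0 = none ∧ B0 = none
  finite_case : μ Set.univ < ∞ → A0.isSome ∧ B0.isSome
  small : min (⨆ i ∈ {i : Pa.ι | some i ≠ A0}, atomSum μ Pa Pb i)
      (⨆ j ∈ {j : Pb.ι | some j ≠ B0}, atomSum μ Pb Pa j) < 1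

/-- The measure `dν_β(x) = min{1, |x|^{-β}} dx` on `ℝⁿ`. -/
noncomputable def nuMeas (n : ℕ) (β : ℝ) : Measure (EuclideanSpace ℝ (Fin n)) :=
  volume.withDensity fun x => ENNReal.ofReal (min 1 (‖x‖ ^ (-β)))

/-- The cube `Q_s = [-2^s λ, 2^s λ]ⁿ`. -/
def cubeQ (n : ℕ) (lam : ℝ) (s : ℕ) : Set (EuclideanSpace ℝ (Fin n)) :=
  {x | ∀ i, |x i| ≤ 2 ^ s * lam}

/-- The corona atoms `A_0 = Q_0` and `A_s = Q_{2s} ∖ Q_{2s-2}` for `s ≥ 1`. -/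
def Aatom (n : ℕ) (lam : ℝ) : ℕ → Set (EuclideanSpace ℝ (Fin n))
  | 0 => cubeQ n lam 0
  | s + 1 => cubeQ n lam (2 * (s + 1)) \ cubeQ n lam (2 * s)

/-- The corona atoms `B_0 = Q_1` and `B_s = Q_{2s+1} ∖ Q_{2s-1}` for `s ≥ 1`. -/
def Batom (n : ℕ) (lam : ℝ) : ℕ → Set (EuclideanSpace ℝ (Fin n))
  | 0 => cubeQ n lam 1
  | s + 1 => cubeQ n lam (2 * (s + 1) + 1) \ cubeQ n lam (2 * s + 1)

/-!
Let `L_s = Q_s \ Q_{s-1}` (with `L_0 = Q_0`) be the dyadic coronas. On `L_{s+1}` the density is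
at most `(2^s λ)^{-β}` and the volume at most `(2^{s+2} λ)^n`, while `L_s` contains a box of
volume `(2^s λ / 8n)^n` on which the density is at least `(5 · 2^s λ / 8)^{-β}`. Once
`β ≥ 30 n^{3/2}` the gain `(8/5)^β` beats the loss `8 (32 n)^n`, so
`ν(L_{s+1}) ≤ ν(L_s) / 8`.

Each `B_j` and each `A_i` with `i ≥ 1` is the union of two consecutive coronas, staggered:
for `i ≥ 1`, `A_i` meets only `B_{i-1}` and `B_i`, in `L_{2i-1}` and `L_{2i}`, and every `B_j`
meets at most two `A`'s. Hence the admissibility sum at `A_i` is at most `2 · 1/8 + 2 · 1/8`.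
Consecutive coronas lie in a common `A`- or `B`-atom and all coronas have positive measure, so
a set that is (up to null sets) in both σ-algebras contains all coronas or none.
-/

open Set

namespace AtomicPartition

variable {Ω : Type*} {m : MeasurableSpace Ω} {μ : Measure Ω}

abbrev ofLevelSets [IsFiniteMeasure μ] (g : Ω → ℕ) (hg : Measurable g)
    (hpos : ∀ i, 0 < μ (g ⁻¹' {i})) : AtomicPartition μ where
  ι := ℕ
  countable := inferInstance
  atom i := g ⁻¹' {i}
  measurableSet i := hg (measurableSet_singleton i)
  disjoint _ _ hij := (disjoint_singleton.2 hij).preimage g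
  cover := by ext; simp
  pos := hpos
  lt_top _ := measure_lt_top μ _

lemma sigma_ofLevelSets_le [IsFiniteMeasure μ] (g : Ω → ℕ) (hg : Measurable g)
    (hpos : ∀ i, 0 < μ (g ⁻¹' {i})) :
    (ofLevelSets g hg hpos).sigma ≤ MeasurableSpace.comap g ⊤ :=
  MeasurableSpace.generateFrom_le <| by
    rintro _ ⟨i, rfl⟩
    exact ⟨{i}, trivial, rfl⟩

end AtomicPartition

section Covering

variable {Ω : Type*} {m : MeasurableSpace Ω} {μ : Measure Ω}

lemma rCard_le_card (Pa Pb : AtomicPartition μ) {j : Pb.ι} {F : Finset Pa.ι}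
    (hF : ∀ i, 0 < μ (Pa.atom i ∩ Pb.atom j) → i ∈ F) : rCard μ Pa Pb j ≤ F.card := by
  calc rCard μ Pa Pb j = ∑' i, {i | 0 < μ (Pa.atom i ∩ Pb.atom j)}.indicator 1 i :=
        tsum_subtype _ 1
    _ ≤ ∑' i, (F : Set Pa.ι).indicator 1 i :=
        ENNReal.tsum_le_tsum (indicator_le_indicator_of_subset hF fun _ => zero_le)
    _ = F.card := by rw [← tsum_subtype]; simp

lemma TrivialIntersection.mono {ma mb ma' mb' : MeasurableSpace Ω}
    (h : TrivialIntersection μ ma mb) (ha : ma' ≤ ma) (hb : mb' ≤ mb) :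
    TrivialIntersection μ ma' mb' :=
  fun S T hS hT => h S T (ha S hS) (hb T hT)

end Covering

lemma ENNReal.mul_sq_div_mul_le {c x y a b q : ℝ≥0∞} (hc : c ≤ 2) (hxa : x ≤ a)
    (hyb : y ≤ b) (hxy : x ≤ q * y) (hx : x ≠ ∞) : c * x ^ 2 / (a * b) ≤ 2 * q := by
  rcases eq_or_ne x 0 with rfl | hx0
  · simp
  calc c * x ^ 2 / (a * b) ≤ 2 * x ^ 2 / (x * y) :=
        ENNReal.div_le_div (mul_le_mul' hc le_rfl) (mul_le_mul' hxa hyb)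
    _ = 2 * (x / y) := by
        rw [sq, mul_left_comm, ENNReal.mul_div_mul_left _ _ hx0 hx, mul_div_assoc]
    _ ≤ 2 * q := mul_le_mul_right (ENNReal.div_le_of_le_mul hxy) 2

section PairedLayers

variable {Ω : Type*} {m : MeasurableSpace Ω} {μ : Measure Ω} {idx : Ω → ℕ}

theorem trivialIntersection_comap_of_chain (hpos : ∀ s, 0 < μ (idx ⁻¹' {s}))
    {a b : ℕ → ℕ} (hab : ∀ s, a s = a (s + 1) ∨ b s = b (s + 1)) :
    TrivialIntersection μ (.comap (a ∘ idx) ⊤) (.comap (b ∘ idx) ⊤) := by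
  rintro _ _ ⟨I, -, rfl⟩ ⟨J, -, rfl⟩ hnull
  -- A layer has positive measure, so it cannot lie in the symmetric difference; consecutive
  -- layers share their `a`- or their `b`-value, so all layers fall on the same side.
  have hmatch : ∀ s, a s ∈ I ↔ b s ∈ J := by
    intro s
    by_contra hs
    have hsub : idx ⁻¹' {s} ⊆ symmDiff ((a ∘ idx) ⁻¹' I) ((b ∘ idx) ⁻¹' J) := by
      intro x hx
      simp only [mem_preimage, mem_singleton_iff] at hx
      simp only [mem_symmDiff, mem_preimage, Function.comp_apply, hx]
      tauto
    exact (hpos s).ne' (measure_mono_null hsub hnull)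
  have hconst : ∀ s, a s ∈ I ↔ a 0 ∈ I := by
    intro s
    induction s with
    | zero => rfl
    | succ s ih =>
      rcases hab s with h | h
      · rw [← h, ih]
      · rw [← ih, hmatch, hmatch, h]
  by_cases h0 : a 0 ∈ I
  · right
    have : (a ∘ idx) ⁻¹' I = univ := eq_univ_of_forall fun x => (hconst (idx x)).2 h0
    simp [this]
  · left
    have : (a ∘ idx) ⁻¹' I = ∅ :=
      eq_empty_of_forall_notMem fun x hx => h0 ((hconst (idx x)).1 hx)
    simp [this]

lemma isFiniteMeasure_of_layer_decay {q : ℝ≥0∞} (hq : q < 1)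
    (h0 : μ (idx ⁻¹' {0}) ≠ ∞)
    (hdecay : ∀ s, μ (idx ⁻¹' {s + 1}) ≤ q * μ (idx ⁻¹' {s})) : IsFiniteMeasure μ := by
  have hgeom : ∀ s, μ (idx ⁻¹' {s}) ≤ q ^ s * μ (idx ⁻¹' {0}) := by
    intro s
    induction s with
    | zero => simp
    | succ s ih => calc
        μ (idx ⁻¹' {s + 1}) ≤ q * μ (idx ⁻¹' {s}) := hdecay s
        _ ≤ q * (q ^ s * μ (idx ⁻¹' {0})) := mul_le_mul_right ih q
        _ = q ^ (s + 1) * μ (idx ⁻¹' {0}) := by ring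
  refine ⟨?_⟩
  calc μ univ = μ (⋃ s, idx ⁻¹' {s}) := by congr; ext; simp
    _ ≤ ∑' s, μ (idx ⁻¹' {s}) := measure_iUnion_le _
    _ ≤ ∑' s, q ^ s * μ (idx ⁻¹' {0}) := ENNReal.tsum_le_tsum hgeom
    _ = (1 - q)⁻¹ * μ (idx ⁻¹' {0}) := by rw [ENNReal.tsum_mul_right, ENNReal.tsum_geometric]
    _ < ∞ := ENNReal.mul_lt_top (ENNReal.inv_lt_top.2 (tsub_pos_of_lt hq)) h0.lt_top

variable [IsFiniteMeasure μ] (hidx : Measurable idx) (hpos : ∀ s, 0 < μ (idx ⁻¹' {s}))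

/- The layers are the level sets `idx ⁻¹' {s}`; the `i`-th atom of `pairedLayersA` is the union
of the layers `2i - 1` and `2i` (only layer `0` for `i = 0`), the `j`-th atom of
`pairedLayersB` that of the layers `2j` and `2j + 1`. -/
abbrev pairedLayersA : AtomicPartition μ :=
  .ofLevelSets (fun x => (idx x + 1) / 2) (by fun_prop) fun i =>
    (hpos (2 * i)).trans_le <| measure_mono fun x (hx : idx x = 2 * i) =>
      show (idx x + 1) / 2 = i by omega

abbrev pairedLayersB : AtomicPartition μ :=
  .ofLevelSets (fun x => idx x / 2) (by fun_prop) fun i =>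
    (hpos (2 * i)).trans_le <| measure_mono fun x (hx : idx x = 2 * i) =>
      show idx x / 2 = i by omega

lemma rCard_pairedLayers_le (j : ℕ) :
    rCard μ (pairedLayersA hidx hpos) (pairedLayersB hidx hpos) j ≤ 2 := by
  refine (rCard_le_card _ _ (F := ({j, j + 1} : Finset ℕ)) fun (i : ℕ) hi => ?_).trans
    (by exact_mod_cast Finset.card_le_two)
  obtain ⟨x, hxA, hxB⟩ := nonempty_of_measure_ne_zero hi.ne'
  simp only [mem_preimage, mem_singleton_iff] at hxA hxB
  simp only [Finset.mem_insert, Finset.mem_singleton]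
  omega

lemma atomSum_pairedLayers_le {q : ℝ≥0∞}
    (hdecay : ∀ s, μ (idx ⁻¹' {s + 1}) ≤ q * μ (idx ⁻¹' {s})) (k : ℕ) :
    atomSum μ (pairedLayersA hidx hpos) (pairedLayersB hidx hpos) (k + 1) ≤ 4 * q := by
  set A := (pairedLayersA hidx hpos).atom
  set B := (pairedLayersB hidx hpos).atom
  have hinter : ∀ j : ℕ, A (k + 1) ∩ B j =
      if j = k then idx ⁻¹' {2 * k + 1}
      else if j = k + 1 then idx ⁻¹' {2 * k + 2} else ∅ := by
    intro j
    ext x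
    simp only [A, B, mem_inter_iff]
    split_ifs <;>
      simp only [mem_preimage, mem_singleton_iff, mem_empty_iff_false, iff_false, not_and] <;>
      omega
  have hA : ∀ s, s = 2 * k + 1 ∨ s = 2 * k + 2 → μ (idx ⁻¹' {s}) ≤ μ (A (k + 1)) :=
    fun s hs => measure_mono fun x (hx : idx x = s) => show (idx x + 1) / 2 = k + 1 by omega
  have hB : ∀ s j, s = 2 * j ∨ s = 2 * j + 1 → μ (idx ⁻¹' {s}) ≤ μ (B j) :=
    fun s j hs => measure_mono fun x (hx : idx x = s) => show idx x / 2 = j by omega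
  rw [atomSum, tsum_eq_sum (s := ({k, k + 1} : Finset ℕ)), Finset.sum_pair (by omega)]
  · calc _ ≤ 2 * q + 2 * q := add_le_add ?_ ?_
      _ = 4 * q := by ring
    · rw [hinter, if_pos rfl]
      exact ENNReal.mul_sq_div_mul_le (rCard_pairedLayers_le hidx hpos k) (hA _ (.inl rfl))
        (hB _ k (.inl rfl)) (hdecay _) (measure_ne_top μ _)
    · rw [hinter, if_neg (by omega), if_pos rfl, mul_comm (μ (A _))]
      exact ENNReal.mul_sq_div_mul_le (rCard_pairedLayers_le hidx hpos (k + 1))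
        (hB _ (k + 1) (.inl rfl)) (hA _ (.inl rfl)) (hdecay _) (measure_ne_top μ _)
  · intro j hj
    simp only [Finset.mem_insert, Finset.mem_singleton, not_or] at hj
    rw [hinter, if_neg hj.1, if_neg hj.2]
    simp

theorem isAdmissibleCovering_pairedLayers {q : ℝ≥0∞} (hq : 4 * q < 1)
    (hdecay : ∀ s, μ (idx ⁻¹' {s + 1}) ≤ q * μ (idx ⁻¹' {s})) :
    IsAdmissibleCovering μ (pairedLayersA hidx hpos) (pairedLayersB hidx hpos) (some 0)
      (some 0) where
  trivial_inter :=
    (trivialIntersection_comap_of_chain hpos (a := fun s => (s + 1) / 2) (b := fun s => s / 2)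
      (by omega)).mono (AtomicPartition.sigma_ofLevelSets_le _ _ _)
      (AtomicPartition.sigma_ofLevelSets_le _ _ _)
  infinite_case h := absurd h (measure_ne_top μ _)
  finite_case _ := ⟨rfl, rfl⟩
  small := by
    refine (min_le_left _ _).trans_lt ((iSup₂_le fun i hi => ?_).trans_lt hq)
    obtain ⟨k, rfl⟩ := Nat.exists_eq_succ_of_ne_zero fun h => hi (congrArg some h)
    exact atomSum_pairedLayers_le hidx hpos hdecay k

end PairedLayers

namespace EuclideanSpace

variable {ι : Type*}

lemma setOf_forall_mem_eq_preimage (s : ι → Set ℝ) :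
    {x : EuclideanSpace ℝ ι | ∀ i, x i ∈ s i} =
      (MeasurableEquiv.toLp 2 (ι → ℝ)).symm ⁻¹' univ.pi s := by
  ext x
  simp

variable [Fintype ι]

lemma measurableSet_setOf_forall_mem {s : ι → Set ℝ} (hs : ∀ i, MeasurableSet (s i)) :
    MeasurableSet {x : EuclideanSpace ℝ ι | ∀ i, x i ∈ s i} := by
  rw [setOf_forall_mem_eq_preimage]
  exact (MeasurableEquiv.toLp 2 _).symm.measurable (.univ_pi hs)

lemma volume_setOf_forall_mem (s : ι → Set ℝ) :
    volume {x : EuclideanSpace ℝ ι | ∀ i, x i ∈ s i} = ∏ i, volume (s i) := by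
  rw [setOf_forall_mem_eq_preimage,
    (volume_preserving_symm_measurableEquiv_toLp ι).measure_preimage_equiv, volume_pi_pi]

lemma abs_apply_le_norm (x : EuclideanSpace ℝ ι) (i : ι) : |x i| ≤ ‖x‖ :=
  PiLp.norm_apply_le x i

lemma norm_le_sum_abs (x : EuclideanSpace ℝ ι) : ‖x‖ ≤ ∑ i, |x i| := by
  rw [norm_eq, Real.sqrt_le_left (by positivity)]
  simpa only [Real.norm_eq_abs, sq_abs] using
    Finset.sum_sq_le_sq_sum_of_nonneg fun i _ => abs_nonneg (x i)

lemma norm_le_sum_add_card_mul_of_forall_mem_Ioc {a : ι → ℝ} {δ : ℝ} (ha : 0 ≤ a)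
    {x : EuclideanSpace ℝ ι} (hx : ∀ i, x i ∈ Ioc (a i) (a i + δ)) :
    ‖x‖ ≤ ∑ i, a i + Fintype.card ι * δ := by
  calc ‖x‖ ≤ ∑ i, |x i| := norm_le_sum_abs x
    _ ≤ ∑ i, (a i + δ) := Finset.sum_le_sum fun i _ => by
        rw [abs_of_pos ((ha i).trans_lt (hx i).1)]
        exact (hx i).2
    _ = ∑ i, a i + Fintype.card ι * δ := by simp [Finset.sum_add_distrib]

end EuclideanSpace

section Cubes

variable {n : ℕ} {lam : ℝ}

lemma cubeQ_eq_setOf (n : ℕ) (lam : ℝ) (s : ℕ) :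
    cubeQ n lam s = {x | ∀ i, x i ∈ Icc (-(2 ^ s * lam)) (2 ^ s * lam)} := by
  ext
  simp [cubeQ, abs_le]

lemma measurableSet_cubeQ (s : ℕ) : MeasurableSet (cubeQ n lam s) := by
  rw [cubeQ_eq_setOf]
  exact EuclideanSpace.measurableSet_setOf_forall_mem fun _ => measurableSet_Icc

lemma volume_cubeQ (s : ℕ) :
    volume (cubeQ n lam s) = ENNReal.ofReal (2 * (2 ^ s * lam)) ^ n := by
  rw [cubeQ_eq_setOf, EuclideanSpace.volume_setOf_forall_mem]
  simp [Real.volume_Icc, two_mul]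

lemma cubeQ_mono (hlam : 0 ≤ lam) : Monotone (cubeQ n lam) :=
  fun _ _ hst _ hx i => (hx i).trans (by gcongr; norm_num)

lemma exists_mem_cubeQ (hlam : 0 < lam) (x : EuclideanSpace ℝ (Fin n)) :
    ∃ s, x ∈ cubeQ n lam s := by
  obtain ⟨s, hs⟩ := pow_unbounded_of_one_lt (‖x‖ / lam) one_lt_two
  refine ⟨s, fun i => (EuclideanSpace.abs_apply_le_norm x i).trans ?_⟩
  rw [div_lt_iff₀ hlam] at hs
  exact hs.le

-- For `lam > 0` its level sets are the coronas `Q_0, Q_1 \ Q_0, Q_2 \ Q_1, …`.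
noncomputable def cubeIndex (n : ℕ) (lam : ℝ) (x : EuclideanSpace ℝ (Fin n)) : ℕ :=
  sInf {s | x ∈ cubeQ n lam s}

lemma cubeIndex_le_iff (hlam : 0 < lam) {x : EuclideanSpace ℝ (Fin n)} {s : ℕ} :
    cubeIndex n lam x ≤ s ↔ x ∈ cubeQ n lam s :=
  ⟨fun h => cubeQ_mono hlam.le h (Nat.sInf_mem (exists_mem_cubeQ hlam x)),
    fun h => Nat.sInf_le h⟩

lemma measurable_cubeIndex (hlam : 0 < lam) : Measurable (cubeIndex n lam) :=
  measurable_of_Iic fun s => by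
    convert measurableSet_cubeQ (n := n) (lam := lam) s using 1
    ext
    exact cubeIndex_le_iff hlam

lemma lt_norm_of_cubeIndex_eq_succ (hlam : 0 < lam) {x : EuclideanSpace ℝ (Fin n)} {s : ℕ}
    (hx : cubeIndex n lam x = s + 1) : 2 ^ s * lam < ‖x‖ := by
  have hxs : x ∉ cubeQ n lam s := by
    rw [← cubeIndex_le_iff hlam]
    omega
  simp only [cubeQ, mem_ofPred_eq, not_forall, not_le] at hxs
  obtain ⟨i, hi⟩ := hxs
  exact hi.trans_le (EuclideanSpace.abs_apply_le_norm x i)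

lemma cubeIndex_eq_of_mem_of_lt_abs (hlam : 0 < lam) {x : EuclideanSpace ℝ (Fin n)} {s : ℕ}
    (hx : x ∈ cubeQ n lam s) {i : Fin n} (hi : 2 ^ s * lam < 2 * |x i|) :
    cubeIndex n lam x = s := by
  refine le_antisymm ((cubeIndex_le_iff hlam).2 hx) (not_lt.1 fun hlt => hi.not_ge ?_)
  have hmem := (cubeIndex_le_iff hlam (x := x)).1 le_rfl i
  calc 2 * |x i| ≤ 2 * (2 ^ cubeIndex n lam x * lam) := by gcongr
    _ = 2 ^ (cubeIndex n lam x + 1) * lam := by ring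
    _ ≤ 2 ^ s * lam := by gcongr; norm_num; omega

end Cubes

section Density

variable {n : ℕ} {β : ℝ} {S : Set (EuclideanSpace ℝ (Fin n))}

lemma nuMeas_le_volume (hS : MeasurableSet S) : nuMeas n β S ≤ volume S := by
  rw [nuMeas, withDensity_apply _ hS]
  calc ∫⁻ x in S, ENNReal.ofReal (min 1 (‖x‖ ^ (-β))) ≤ ∫⁻ _ in S, 1 :=
        setLIntegral_mono' hS fun x _ => ENNReal.ofReal_le_one.2 (min_le_left _ _)
    _ = volume S := by simp

lemma nuMeas_le_rpow_neg_mul_volume (hS : MeasurableSet S) {r : ℝ} (hr : 0 < r) (hβ : 0 ≤ β)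
    (h : ∀ x ∈ S, r ≤ ‖x‖) : nuMeas n β S ≤ ENNReal.ofReal (r ^ (-β)) * volume S := by
  rw [nuMeas, withDensity_apply _ hS, ← setLIntegral_const]
  exact setLIntegral_mono' hS fun x hx => ENNReal.ofReal_le_ofReal <|
    (min_le_right _ _).trans (Real.rpow_le_rpow_of_nonpos hr (h x hx) (neg_nonpos.2 hβ))

lemma rpow_neg_mul_volume_le_nuMeas (hS : MeasurableSet S) {r : ℝ} (hr : 1 ≤ r) (hβ : 0 ≤ β)
    (h : ∀ x ∈ S, 0 < ‖x‖ ∧ ‖x‖ ≤ r) :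
    ENNReal.ofReal (r ^ (-β)) * volume S ≤ nuMeas n β S := by
  rw [nuMeas, withDensity_apply _ hS, ← setLIntegral_const]
  exact setLIntegral_mono' hS fun x hx => ENNReal.ofReal_le_ofReal <| le_min
    (Real.rpow_le_one_of_one_le_of_nonpos hr (neg_nonpos.2 hβ))
    (Real.rpow_le_rpow_of_nonpos (h x hx).1 (h x hx).2 (neg_nonpos.2 hβ))

end Density

lemma eight_mul_pow_le_rpow {n : ℕ} {β : ℝ} (hn : 1 ≤ n)
    (hβ : 30 * (n : ℝ) ^ ((3 : ℝ) / 2) ≤ β) :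
    8 * (32 * n : ℝ) ^ n ≤ (8 / 5 : ℝ) ^ β := by
  -- In logarithms: `3 + 5 n + 2 n √n ≤ 10 n √n ≤ 3 β / 8 ≤ β log (8 / 5)`.
  have hn1 : (1 : ℝ) ≤ n := by exact_mod_cast hn
  set r := √(n : ℝ)
  have hr : 1 ≤ r := Real.one_le_sqrt.2 hn1
  have hn32 : (n : ℝ) ^ ((3 : ℝ) / 2) = n * r := by
    rw [show (3 : ℝ) / 2 = 1 + 1 / 2 by norm_num, Real.rpow_add (by linarith), Real.rpow_one,
      ← Real.sqrt_eq_rpow]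
  have hlog2 : Real.log 2 ≤ 1 := by linarith [Real.log_le_sub_one_of_pos two_pos]
  have hlogn : Real.log n ≤ 2 * r := by
    have := Real.log_le_sub_one_of_pos (lt_of_lt_of_le one_pos hr)
    rw [Real.log_sqrt (by linarith)] at this
    linarith
  have hlog85 : 3 / 8 ≤ Real.log (8 / 5) := by
    have := Real.one_sub_inv_le_log_of_pos (x := 8 / 5) (by norm_num)
    norm_num at this
    linarith
  have hlog8 : Real.log 8 = 3 * Real.log 2 := by
    rw [show (8 : ℝ) = 2 ^ 3 by norm_num, Real.log_pow]; norm_num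
  have hlog32 : Real.log 32 = 5 * Real.log 2 := by
    rw [show (32 : ℝ) = 2 ^ 5 by norm_num, Real.log_pow]; norm_num
  rw [← Real.log_le_log_iff (by positivity) (by positivity), Real.log_mul (by norm_num)
    (by positivity), Real.log_pow, Real.log_mul (by norm_num) (by positivity),
    Real.log_rpow (by norm_num), hlog8, hlog32]
  rw [hn32] at hβ
  have hnr : (n : ℝ) ≤ n * r := le_mul_of_one_le_right (by linarith) hr
  nlinarith [mul_le_mul_of_nonneg_left hlogn (by linarith : (0 : ℝ) ≤ n),
    mul_le_mul_of_nonneg_left hlog2 (by linarith : (0 : ℝ) ≤ n),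
    mul_le_mul_of_nonneg_left hlog85 (by nlinarith : (0 : ℝ) ≤ β)]

lemma rpow_neg_mul_pow_le {n : ℕ} {β P : ℝ} (hn : 1 ≤ n) (hP : 0 < P)
    (h : 8 * (32 * n : ℝ) ^ n ≤ (8 / 5 : ℝ) ^ β) :
    P ^ (-β) * (4 * P) ^ n ≤ 8⁻¹ * ((5 / 8 * P) ^ (-β) * (P / (8 * n)) ^ n) := by
  have h58 : (5 / 8 * P) ^ (-β) = (8 / 5 : ℝ) ^ β * P ^ (-β) := by
    rw [Real.mul_rpow (by norm_num) hP.le, Real.rpow_neg (by norm_num),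
      ← Real.inv_rpow (by norm_num)]
    norm_num
  rw [h58, div_pow, mul_pow]
  calc P ^ (-β) * (4 ^ n * P ^ n) = (P ^ (-β) * P ^ n) * (4 ^ n) := by ring
    _ ≤ (P ^ (-β) * P ^ n) * (8⁻¹ * (8 / 5 : ℝ) ^ β / (8 * n) ^ n) := by
        gcongr
        rw [le_div_iff₀ (by positivity), ← mul_pow, inv_mul_eq_div, le_div_iff₀ (by norm_num)]
        linarith [show (4 * (8 * n) : ℝ) ^ n = (32 * n) ^ n by ring]
    _ = _ := by ring

section CubeLayers

variable {n : ℕ} {β lam : ℝ}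

lemma nuMeas_cubeIndex_preimage_succ_le_ofReal (hlam : 0 < lam) (hβ : 0 ≤ β) (s : ℕ) :
    nuMeas n β (cubeIndex n lam ⁻¹' {s + 1}) ≤
      ENNReal.ofReal ((2 ^ s * lam) ^ (-β) * (4 * (2 ^ s * lam)) ^ n) := by
  have hS := measurable_cubeIndex (n := n) hlam (measurableSet_singleton (s + 1))
  calc nuMeas n β (cubeIndex n lam ⁻¹' {s + 1})
      ≤ ENNReal.ofReal ((2 ^ s * lam) ^ (-β)) * volume (cubeIndex n lam ⁻¹' {s + 1}) :=
        nuMeas_le_rpow_neg_mul_volume hS (by positivity) hβ fun x hx =>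
          (lt_norm_of_cubeIndex_eq_succ hlam hx).le
    _ ≤ ENNReal.ofReal ((2 ^ s * lam) ^ (-β)) * volume (cubeQ n lam (s + 1)) := by
        gcongr
        exact fun x (hx : cubeIndex n lam x = s + 1) => (cubeIndex_le_iff hlam).1 hx.le
    _ = _ := by
        rw [volume_cubeQ, ← ENNReal.ofReal_pow (by positivity),
          ← ENNReal.ofReal_mul (by positivity)]
        ring_nf

lemma le_nuMeas_cubeIndex_preimage (hn : 1 ≤ n) (hlam : 8 / 5 ≤ lam) (hβ : 0 ≤ β)
    (s : ℕ) :
    ENNReal.ofReal ((5 / 8 * (2 ^ s * lam)) ^ (-β) * (2 ^ s * lam / (8 * n)) ^ n) ≤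
      nuMeas n β (cubeIndex n lam ⁻¹' {s}) := by
  set P := 2 ^ s * lam
  have hP : 8 / 5 ≤ P :=
    hlam.trans (le_mul_of_one_le_left (by linarith) (one_le_pow₀ one_le_two))
  have hn0 : (0 : ℝ) < n := by exact_mod_cast hn
  set δ := P / (8 * n)
  have hδ : 0 < δ := by positivity
  have hnδ : n * δ = P / 8 := by simp only [δ]; field_simp
  -- A box of side `δ` sitting on the face `x i₀ = P / 2` of `Q_{s-1}`, outside it.
  let i₀ : Fin n := ⟨0, hn⟩
  let a : Fin n → ℝ := Pi.single i₀ (P / 2)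
  have ha : 0 ≤ a := Pi.single_nonneg.2 (by positivity : (0 : ℝ) ≤ P / 2)
  let R := {x : EuclideanSpace ℝ (Fin n) | ∀ i, x i ∈ Ioc (a i) (a i + δ)}
  have hRmeas : MeasurableSet R :=
    EuclideanSpace.measurableSet_setOf_forall_mem fun _ => measurableSet_Ioc
  have hR₀ : ∀ x ∈ R, P / 2 < |x i₀| := fun x hx =>
    lt_abs.2 (.inl (by simpa [a] using (hx i₀).1))
  have hnorm : ∀ x ∈ R, 0 < ‖x‖ ∧ ‖x‖ ≤ 5 / 8 * P := fun x hx => by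
    refine ⟨(by positivity : (0 : ℝ) < P / 2).trans
      ((hR₀ x hx).trans_le (EuclideanSpace.abs_apply_le_norm x i₀)), ?_⟩
    calc ‖x‖ ≤ ∑ i, a i + n * δ := by
          simpa using EuclideanSpace.norm_le_sum_add_card_mul_of_forall_mem_Ioc ha hx
      _ = 5 / 8 * P := by simp [a, hnδ]; ring
  have hRsub : R ⊆ cubeIndex n lam ⁻¹' {s} := fun x hx =>
    cubeIndex_eq_of_mem_of_lt_abs (by linarith) (i := i₀)
      (fun i => (EuclideanSpace.abs_apply_le_norm x i).trans
        ((hnorm x hx).2.trans (by linarith)))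
      (by linarith [hR₀ x hx])
  have hvol : volume R = ENNReal.ofReal δ ^ n := by
    rw [EuclideanSpace.volume_setOf_forall_mem]
    simp [Real.volume_Ioc]
  calc ENNReal.ofReal ((5 / 8 * P) ^ (-β) * δ ^ n)
      = ENNReal.ofReal ((5 / 8 * P) ^ (-β)) * volume R := by
        rw [hvol, ← ENNReal.ofReal_pow hδ.le, ← ENNReal.ofReal_mul (by positivity)]
    _ ≤ nuMeas n β R := rpow_neg_mul_volume_le_nuMeas hRmeas (by linarith) hβ hnorm
    _ ≤ nuMeas n β (cubeIndex n lam ⁻¹' {s}) := measure_mono hRsub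

lemma nuMeas_cubeIndex_preimage_succ_le (hn : 1 ≤ n)
    (hβ : 30 * (n : ℝ) ^ ((3 : ℝ) / 2) ≤ β) (hlam : 8 / 5 ≤ lam) (s : ℕ) :
    nuMeas n β (cubeIndex n lam ⁻¹' {s + 1}) ≤
      8⁻¹ * nuMeas n β (cubeIndex n lam ⁻¹' {s}) := by
  have hβ0 : 0 ≤ β := le_trans (by positivity) hβ
  calc nuMeas n β (cubeIndex n lam ⁻¹' {s + 1})
      ≤ ENNReal.ofReal ((2 ^ s * lam) ^ (-β) * (4 * (2 ^ s * lam)) ^ n) :=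
        nuMeas_cubeIndex_preimage_succ_le_ofReal (by linarith) hβ0 s
    _ ≤ ENNReal.ofReal (8⁻¹ *
          ((5 / 8 * (2 ^ s * lam)) ^ (-β) * (2 ^ s * lam / (8 * n)) ^ n)) :=
        ENNReal.ofReal_le_ofReal <|
          rpow_neg_mul_pow_le hn (by positivity) (eight_mul_pow_le_rpow hn hβ)
    _ = 8⁻¹ *
          ENNReal.ofReal ((5 / 8 * (2 ^ s * lam)) ^ (-β) * (2 ^ s * lam / (8 * n)) ^ n) := by
        rw [ENNReal.ofReal_mul (by norm_num), ENNReal.ofReal_inv_of_pos (by norm_num)]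
        norm_num
    _ ≤ 8⁻¹ * nuMeas n β (cubeIndex n lam ⁻¹' {s}) := by
        gcongr
        exact le_nuMeas_cubeIndex_preimage hn hlam hβ0 s

lemma nuMeas_cubeIndex_preimage_pos (hn : 1 ≤ n) (hlam : 8 / 5 ≤ lam) (hβ : 0 ≤ β)
    (s : ℕ) :
    0 < nuMeas n β (cubeIndex n lam ⁻¹' {s}) := by
  refine lt_of_lt_of_le (ENNReal.ofReal_pos.2 ?_) (le_nuMeas_cubeIndex_preimage hn hlam hβ s)
  positivity

lemma nuMeas_cubeIndex_preimage_zero_ne_top (hlam : 0 < lam) :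
    nuMeas n β (cubeIndex n lam ⁻¹' {0}) ≠ ∞ := by
  refine ne_top_of_le_ne_top ?_ ((measure_mono fun x (hx : cubeIndex n lam x = 0) =>
    (cubeIndex_le_iff hlam).1 hx.le).trans (nuMeas_le_volume (measurableSet_cubeQ 0)))
  rw [volume_cubeQ]
  exact ENNReal.pow_ne_top ENNReal.ofReal_ne_top

lemma Aatom_eq_preimage (hlam : 0 < lam) (i : ℕ) :
    Aatom n lam i = (fun x => (cubeIndex n lam x + 1) / 2) ⁻¹' {i} := by
  ext x
  simp only [mem_preimage, mem_singleton_iff]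
  cases i with
  | zero => simp only [Aatom, ← cubeIndex_le_iff hlam]; omega
  | succ k => simp only [Aatom, mem_sdiff, ← cubeIndex_le_iff hlam]; omega

lemma Batom_eq_preimage (hlam : 0 < lam) (i : ℕ) :
    Batom n lam i = (fun x => cubeIndex n lam x / 2) ⁻¹' {i} := by
  ext x
  simp only [mem_preimage, mem_singleton_iff]
  cases i with
  | zero => simp only [Batom, ← cubeIndex_le_iff hlam]; omega
  | succ k => simp only [Batom, mem_sdiff, ← cubeIndex_le_iff hlam]; omega

end CubeLayers

/-- There is an absolute constant `C > 0` such that for all `n ≥ 1` and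
`β ≥ C n^{3/2}` there is `λ₀ = λ₀(n,β) ≥ 1` so that for every `λ ≥ λ₀` the corona
families `(A_s)_{s≥0}` and `(B_s)_{s≥0}` generate atomic σ-algebras which form an
admissible covering of `(ℝⁿ, ν_β)` with distinguished atoms `A_0, B_0`. -/
theorem statement15 :
    ∃ C : ℝ, 0 < C ∧ ∀ n : ℕ, 1 ≤ n → ∀ β : ℝ, C * (n : ℝ) ^ ((3 : ℝ) / 2) ≤ β →
      ∃ lam0 : ℝ, 1 ≤ lam0 ∧ ∀ lam : ℝ, lam0 ≤ lam →
        ∃ (Pa Pb : AtomicPartition (nuMeas n β)) (i0 : Pa.ι) (j0 : Pb.ι),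
          Pa.atom i0 = Aatom n lam 0 ∧ Pb.atom j0 = Batom n lam 0 ∧
          Set.range Pa.atom = Set.range (Aatom n lam) ∧
          Set.range Pb.atom = Set.range (Batom n lam) ∧
          IsAdmissibleCovering (nuMeas n β) Pa Pb (some i0) (some j0) := by
  refine ⟨30, by norm_num, fun n hn β hβ => ⟨8 / 5, by norm_num, fun lam hlam => ?_⟩⟩
  have hlam0 : 0 < lam := by linarith
  have hidx := measurable_cubeIndex (n := n) hlam0
  have hpos := nuMeas_cubeIndex_preimage_pos (β := β) hn hlam (le_trans (by positivity) hβ)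
  have hdecay := nuMeas_cubeIndex_preimage_succ_le hn hβ hlam
  have := isFiniteMeasure_of_layer_decay (ENNReal.inv_lt_one.2 (by norm_num))
    (nuMeas_cubeIndex_preimage_zero_ne_top hlam0) hdecay
  have hA : (pairedLayersA hidx hpos).atom = Aatom n lam :=
    (funext (Aatom_eq_preimage hlam0)).symm
  have hB : (pairedLayersB hidx hpos).atom = Batom n lam :=
    (funext (Batom_eq_preimage hlam0)).symm
  refine ⟨pairedLayersA hidx hpos, pairedLayersB hidx hpos, 0, 0, congrFun hA 0, congrFun hB 0,
    congrArg range hA, congrArg range hB, isAdmissibleCovering_pairedLayers hidx hpos ?_ hdecay⟩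
  rw [← div_eq_mul_inv, ENNReal.div_lt_iff (by norm_num) (by norm_num)]
  norm_num
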